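/- arXiv:2508.13283 — 3 statements merged into one kernel-verified Lean document; each statement's English description precedes it below -/
import Mathlib

section
/- For all real numbers r, R, l, t₁, t₂, φ with R > 0, l > 0 and r ≥ R, let P = (T₁, T₂, X₁, X₂) be the BTZ embedding of (r, t₁, φ) and let P' = (T₁(r,t₂,φ), T₂(r,t₂,φ), −X₁(r,t₂,φ), X₂(r,t₂,φ)) be the left-wedge embedding of (r, t₂, φ) (obtained from the BTZ embedding by negating the X₁ coordinate). Then T₁T₁' + T₂T₂' − X₁X₁' − X₂X₂' = ((r² − R²)/R²)·cosh(R(t₁ + t₂)/l²) + r²/R². -/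
/-- For the BTZ embedding `P` of `(r, t₁, φ)` and the left-wedge embedding `P'` of
`(r, t₂, φ)` (obtained by negating the `X₁` coordinate), the ambient ℝ^{2,2} pairing is
`T₁T₁' + T₂T₂' − X₁X₁' − X₂X₂' = ((r² − R²)/R²) cosh(R(t₁+t₂)/l²) + r²/R²`. -/
theorem btz_left_right_pairing
    (r R l t₁ t₂ φ : ℝ) (hR : 0 < R) (hl : 0 < l) (hr : R ≤ r) :
    ((1 / R) * Real.sqrt (r ^ 2 - R ^ 2) * Real.sinh (R * t₁ / l ^ 2))
        * ((1 / R) * Real.sqrt (r ^ 2 - R ^ 2) * Real.sinh (R * t₂ / l ^ 2))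
      + ((r / R) * Real.cosh (R * φ / l)) * ((r / R) * Real.cosh (R * φ / l))
      - ((1 / R) * Real.sqrt (r ^ 2 - R ^ 2) * Real.cosh (R * t₁ / l ^ 2))
        * (-((1 / R) * Real.sqrt (r ^ 2 - R ^ 2) * Real.cosh (R * t₂ / l ^ 2)))
      - ((r / R) * Real.sinh (R * φ / l)) * ((r / R) * Real.sinh (R * φ / l))
      = ((r ^ 2 - R ^ 2) / R ^ 2) * Real.cosh (R * (t₁ + t₂) / l ^ 2) + r ^ 2 / R ^ 2 := by
  have hsq : Real.sqrt (r ^ 2 - R ^ 2) * Real.sqrt (r ^ 2 - R ^ 2) = r ^ 2 - R ^ 2 :=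
    Real.mul_self_sqrt (by nlinarith)
  have hadd : R * (t₁ + t₂) / l ^ 2 = R * t₁ / l ^ 2 + R * t₂ / l ^ 2 := by ring
  have hcadd := Real.cosh_add (R * t₁ / l ^ 2) (R * t₂ / l ^ 2)
  have hφ := Real.cosh_sq_sub_sinh_sq (R * φ / l)
  have hR' : (R:ℝ) ≠ 0 := ne_of_gt hR
  rw [hadd, hcadd]
  linear_combination (Real.sinh (R*t₁/l^2) * Real.sinh (R*t₂/l^2)
      + Real.cosh (R*t₁/l^2) * Real.cosh (R*t₂/l^2)) / R^2 * hsq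
    + r^2 / R^2 * hφ
end

section
/- Fix R > 0, l > 0 and t₁, t₂ ∈ ℝ, and set K = R(t₁ + t₂)/l². For r ≥ R define y(r) = ((r² − R²)/R²)·cosh K + r²/R² and define the geodesic length d(r) = log( y(r) + √(y(r)² − 1) ) (so that cosh(d(r)) = y(r) and d(r) ≥ 0). Then as r → ∞, the renormalized geodesic length d(r) − 2·log(2r/R) converges to 2·log( cosh(K/2) ) = 2·log( cosh( R(t₁ + t₂)/(2l²) ) ). -/
open Filter Real

/-- Renormalized geodesic length of the eternal BTZ black hole: with
`K = R(t₁+t₂)/l²`, `y(r) = ((r²−R²)/R²) cosh K + r²/R²` and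
`d(r) = log(y(r) + √(y(r)² − 1))` (so `cosh (d r) = y r`, `d r ≥ 0`),
the quantity `d(r) − 2 log(2r/R)` converges, as `r → ∞`, to
`2 log (cosh (R(t₁+t₂)/(2l²)))`. -/
theorem btz_renormalized_geodesic_length
    (R l t₁ t₂ : ℝ) (hR : 0 < R) (hl : 0 < l) :
    Tendsto (fun r : ℝ =>
        (Real.log ((((r ^ 2 - R ^ 2) / R ^ 2) * Real.cosh (R * (t₁ + t₂) / l ^ 2) + r ^ 2 / R ^ 2)
            + Real.sqrt ((((r ^ 2 - R ^ 2) / R ^ 2) * Real.cosh (R * (t₁ + t₂) / l ^ 2)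
                + r ^ 2 / R ^ 2) ^ 2 - 1))
          - 2 * Real.log (2 * r / R)))
      atTop (nhds (2 * Real.log (Real.cosh (R * (t₁ + t₂) / (2 * l ^ 2))))) := by
  have hl2 : (l:ℝ) ^ 2 ≠ 0 := by positivity
  set K : ℝ := R * (t₁ + t₂) / l ^ 2 with hK
  set c : ℝ := Real.cosh K with hc
  have hc1 : 1 ≤ c := Real.one_le_cosh K
  have hRne : R ≠ 0 := hR.ne'
  -- auxiliary function of u = R²/r²
  set F : ℝ → ℝ := fun u => ((1 - u) * c + 1 + Real.sqrt (((1 - u) * c + 1) ^ 2 - u ^ 2)) / 4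
    with hF
  have hFcont : ContinuousAt F 0 := by fun_prop
  have hF0 : F 0 = (c + 1) / 2 := by
    simp only [hF]
    rw [show ((1 - (0:ℝ)) * c + 1) ^ 2 - (0:ℝ) ^ 2 = (c + 1) ^ 2 by ring,
      Real.sqrt_sq (by linarith)]
    ring
  have hLpos : (0:ℝ) < (c + 1) / 2 := by linarith
  have hu : Tendsto (fun r : ℝ => R ^ 2 / r ^ 2) atTop (nhds 0) :=
    tendsto_const_nhds.div_atTop (tendsto_pow_atTop two_ne_zero)
  have hcomp : Tendsto (fun r : ℝ => F (R ^ 2 / r ^ 2)) atTop (nhds ((c + 1) / 2)) := by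
    rw [← hF0]
    exact hFcont.tendsto.comp hu
  have hlogcomp :
      Tendsto (fun r : ℝ => Real.log (F (R ^ 2 / r ^ 2))) atTop
        (nhds (Real.log ((c + 1) / 2))) :=
    (Real.continuousAt_log hLpos.ne').tendsto.comp hcomp
  -- identify the limit
  have ha2 : K = 2 * (R * (t₁ + t₂) / (2 * l ^ 2)) := by
    rw [hK]; field_simp
  have hcoshsq : Real.cosh (R * (t₁ + t₂) / (2 * l ^ 2)) ^ 2 = (c + 1) / 2 := by
    have := Real.cosh_two_mul (R * (t₁ + t₂) / (2 * l ^ 2))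
    rw [← ha2] at this
    have h2 := Real.sinh_sq (R * (t₁ + t₂) / (2 * l ^ 2))
    rw [hc]; linarith
  have hlim : Real.log ((c + 1) / 2) = 2 * Real.log (Real.cosh (R * (t₁ + t₂) / (2 * l ^ 2))) := by
    rw [← hcoshsq, Real.log_pow]
    norm_num
  rw [← hlim]
  -- eventual equality
  refine hlogcomp.congr' ?_
  filter_upwards [eventually_gt_atTop R] with r hr
  have hr0 : 0 < r := hR.trans hr
  have hrne : r ≠ 0 := hr0.ne'
  set u : ℝ := R ^ 2 / r ^ 2 with huu
  have hu0 : 0 < u := by positivity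
  have hu1 : u < 1 := by
    rw [huu, div_lt_one (by positivity)]
    nlinarith
  set A : ℝ := (1 - u) * c + 1 with hA
  have hA1 : (1:ℝ) ≤ A := by nlinarith
  have key : ((r ^ 2 - R ^ 2) / R ^ 2) * c + r ^ 2 / R ^ 2 = r ^ 2 / R ^ 2 * A := by
    rw [hA, huu]; field_simp
  have hsub : (((r ^ 2 - R ^ 2) / R ^ 2) * c + r ^ 2 / R ^ 2) ^ 2 - 1
      = (r ^ 2 / R ^ 2) ^ 2 * (A ^ 2 - u ^ 2) := by
    rw [key, hA, huu]; field_simp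
  have hsqrt : Real.sqrt ((((r ^ 2 - R ^ 2) / R ^ 2) * c + r ^ 2 / R ^ 2) ^ 2 - 1)
      = r ^ 2 / R ^ 2 * Real.sqrt (A ^ 2 - u ^ 2) := by
    rw [hsub, Real.sqrt_mul (by positivity), Real.sqrt_sq (by positivity)]
  have hFpos : 0 < F u := by
    have h1 : 0 ≤ Real.sqrt (A ^ 2 - u ^ 2) := Real.sqrt_nonneg _
    have : (0:ℝ) < A + Real.sqrt (((1 - u) * c + 1) ^ 2 - u ^ 2) := by
      rw [← hA]; linarith
    simp only [hF, ← hA]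
    linarith
  have hfactor : (((r ^ 2 - R ^ 2) / R ^ 2) * c + r ^ 2 / R ^ 2)
      + Real.sqrt ((((r ^ 2 - R ^ 2) / R ^ 2) * c + r ^ 2 / R ^ 2) ^ 2 - 1)
      = (2 * r / R) ^ 2 * F u := by
    rw [hsqrt, key]
    simp only [hF, ← hA]
    field_simp
    ring
  show _ = _
  rw [hfactor, Real.log_mul (by positivity) hFpos.ne', Real.log_pow]
  push_cast
  ring
end

section
/- Let n be a nonempty finite index type, let H be an n × n Hermitian complex matrix and A an arbitrary n × n complex matrix. For every ε > 0 and every T ∈ ℝ there exists t ≥ T such that ‖ exp(i·t·H) * A * exp(−i·t·H) − A ‖ < ε, where exp denotes the matrix exponential. In other words, the Heisenberg evolution t ↦ exp(itH) A exp(−itH) returns arbitrarily close (in norm) to A at arbitrarily late times. -/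
open NormedSpace Matrix
open scoped NNReal

attribute [local instance] Matrix.linftyOpNormedRing Matrix.linftyOpNormedAlgebra

/-- Quasiperiodicity of Heisenberg evolution with discrete spectrum: for a Hermitian
matrix `H` and an arbitrary matrix `A`, the evolution `t ↦ exp(itH) A exp(−itH)`
returns within `ε` (in norm) of `A` at some time `t ≥ T`, for every `ε > 0` and `T`. -/
theorem heisenberg_evolution_recurrence
    {n : Type*} [Fintype n] [Nonempty n] [DecidableEq n]
    (H A : Matrix n n ℂ) (hH : H.IsHermitian) :
    ∀ ε : ℝ, 0 < ε → ∀ T : ℝ, ∃ t : ℝ, T ≤ t ∧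
      ‖exp ((Complex.I * (t : ℂ)) • H) * A * exp (-((Complex.I * (t : ℂ)) • H)) - A‖ < ε := by
  intro ε hε T
  set U : ℝ → Matrix n n ℂ := fun t => exp ((Complex.I * (t : ℂ)) • H) with hUdef
  have hadd : ∀ a b : ℝ, U a * U b = U (a + b) := by
    intro a b
    have hc : Commute ((Complex.I * (a : ℂ)) • H) ((Complex.I * (b : ℂ)) • H) :=
      ((Commute.refl H).smul_left _).smul_right _
    have := (Matrix.exp_add_of_commute ((Complex.I * (a : ℂ)) • H)
      ((Complex.I * (b : ℂ)) • H) hc).symm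
    simp only [hUdef]
    rw [this]
    congr 1
    push_cast
    module
  have hU0 : U 0 = 1 := by simp [hUdef, exp_zero]
  have hinv : ∀ t : ℝ, U t * U (-t) = 1 := by
    intro t; rw [hadd]; simp [hU0]
  have hherm : ∀ t : ℝ, (U t)ᴴ = U (-t) := by
    intro t
    have : ((Complex.I * (t : ℂ)) • H)ᴴ = (Complex.I * ((-t : ℝ) : ℂ)) • H := by
      rw [Matrix.conjTranspose_smul, hH.eq]
      congr 1
      simp [Complex.ext_iff]
    rw [hUdef]
    simp only
    rw [← Matrix.exp_conjTranspose, this]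
  -- entries of U t are bounded by 1
  have hentry : ∀ (t : ℝ) (i j : n), ‖U t i j‖ ≤ 1 := by
    intro t i j
    have h1 : U t * (U t)ᴴ = 1 := by rw [hherm]; exact hinv t
    have h2 : (U t * (U t)ᴴ) i i = 1 := by rw [h1]; simp
    rw [Matrix.mul_apply] at h2
    have h2' : ∑ k, ((Complex.normSq (U t i k) : ℂ)) = 1 := by
      rw [← h2]
      apply Finset.sum_congr rfl
      intro k _
      rw [Matrix.conjTranspose_apply, ← Complex.mul_conj]
      rfl
    have h3 : ∑ k, Complex.normSq (U t i k) = 1 := by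
      have := congrArg Complex.re h2'
      simpa using this
    have h4 : Complex.normSq (U t i j) ≤ 1 := by
      rw [← h3]
      exact Finset.single_le_sum (fun k _ => Complex.normSq_nonneg _) (Finset.mem_univ j)
    have h5 : ‖U t i j‖ ^ 2 ≤ 1 := by
      rwa [← Complex.sq_norm] at h4
    nlinarith [norm_nonneg (U t i j)]
  have hUneg : ∀ t : ℝ, exp (-((Complex.I * (t : ℂ)) • H)) = U (-t) := by
    intro t
    simp only [hUdef]
    congr 1
    push_cast
    module
  -- operator norm bound
  set Nc : ℝ := (Fintype.card n : ℝ) with hNcdef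
  have hNc1 : (1 : ℝ) ≤ Nc := by
    have := Fintype.card_pos (α := n)
    simp only [hNcdef]
    exact_mod_cast this
  have hNcpos : (0 : ℝ) < Nc := lt_of_lt_of_le one_pos hNc1
  have hnorm : ∀ t : ℝ, ‖U t‖ ≤ Nc := by
    intro t
    rw [Matrix.linfty_opNorm_def]
    have key : ((Finset.univ : Finset n).sup fun i => ∑ j, ‖U t i j‖₊) ≤
        ((Fintype.card n : ℝ≥0)) := by
      apply Finset.sup_le
      intro i _
      calc ∑ j, ‖U t i j‖₊ ≤ ∑ _j : n, 1 :=
            Finset.sum_le_sum (fun j _ => by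
              have := hentry t i j
              exact_mod_cast this)
        _ = (Fintype.card n : ℝ≥0) := by simp
    simp only [hNcdef]
    exact_mod_cast key
  -- choose tolerances
  set δ : ℝ := ε / (2 * Nc * (‖A‖ + 1)) with hδdef
  have hδpos : 0 < δ := by
    apply div_pos hε
    nlinarith [norm_nonneg A]
  have hδε : 2 * Nc * (‖A‖ + 1) * δ = ε := by
    rw [hδdef]
    field_simp
  set η : ℝ := δ / Nc with hηdef
  have hηpos : 0 < η := div_pos hδpos hNcpos
  have hηNc : η * Nc = δ := div_mul_cancel₀ δ (ne_of_gt hNcpos)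
  set T₀ : ℝ := max T 1 with hT₀def
  have hT₀T : T ≤ T₀ := le_max_left _ _
  have hT₀1 : (1 : ℝ) ≤ T₀ := le_max_right _ _
  -- recurrence via compactness
  haveI : ProperSpace (Matrix n n ℂ) := FiniteDimensional.proper ℂ _
  have hcomp : IsCompact (Metric.closedBall (0 : Matrix n n ℂ) Nc) :=
    isCompact_closedBall _ _
  have hmem : ∀ k : ℕ, U ((k : ℝ) * T₀) ∈ Metric.closedBall (0 : Matrix n n ℂ) Nc := by
    intro k
    rw [Metric.mem_closedBall, dist_zero_right]
    exact hnorm _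
  haveI : FirstCountableTopology (Matrix n n ℂ) := inferInstanceAs (FirstCountableTopology (n → n → ℂ))
  obtain ⟨a, -, φ, hφ, hconv⟩ :=
    hcomp.tendsto_subseq (x := fun k : ℕ => U ((k : ℝ) * T₀)) hmem
  replace hconv := (@Metric.tendsto_atTop (Matrix n n ℂ) ℕ
    Matrix.linftyOpNormedAddCommGroup.toPseudoMetricSpace _ _ _ _).1 hconv
  obtain ⟨K, hK⟩ := hconv (η / 2) (by linarith)
  have h1 := hK K le_rfl
  have h2 := hK (K + 1) (by omega)
  simp only [Function.comp_apply] at h1 h2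
  set p : ℝ := (φ K : ℝ) * T₀ with hpdef
  set q : ℝ := (φ (K + 1) : ℝ) * T₀ with hqdef
  have hd : ‖U q - U p‖ < η := by
    have htri := dist_triangle (U q) a (U p)
    rw [dist_eq_norm, dist_eq_norm, dist_eq_norm] at htri
    have h2' : ‖U q - a‖ < η / 2 := by rw [← dist_eq_norm]; exact h2
    have h1' : ‖a - U p‖ < η / 2 := by
      rw [norm_sub_rev, ← dist_eq_norm]; exact h1
    linarith [htri]
  set s : ℝ := q - p with hsdef
  have hφlt : φ K < φ (K + 1) := hφ (Nat.lt_succ_self K)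
  have hsT : T ≤ s := by
    have hcast : (φ K : ℝ) + 1 ≤ (φ (K + 1) : ℝ) := by exact_mod_cast hφlt
    have hφK : (0 : ℝ) ≤ (φ K : ℝ) := Nat.cast_nonneg _
    have : T₀ ≤ s := by
      rw [hsdef, hqdef, hpdef]
      nlinarith
    linarith
  refine ⟨s, hsT, ?_⟩
  rw [hUneg s]
  have e1 : U s - 1 = (U q - U p) * U (-p) := by
    have hqp : q + -p = s := by rw [hsdef]; ring
    rw [sub_mul, hadd q (-p), hadd p (-p), add_neg_cancel, hU0, hqp]
  have hUs : ‖U s - 1‖ < δ := by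
    calc ‖U s - 1‖ = ‖(U q - U p) * U (-p)‖ := by rw [e1]
      _ ≤ ‖U q - U p‖ * ‖U (-p)‖ := norm_mul_le _ _
      _ ≤ ‖U q - U p‖ * Nc := mul_le_mul_of_nonneg_left (hnorm _) (norm_nonneg _)
      _ < η * Nc := mul_lt_mul_of_pos_right hd hNcpos
      _ = δ := hηNc
  have e3 : U (-s) - 1 = U (-s) * (1 - U s) := by
    rw [mul_sub, mul_one, hadd (-s) s, neg_add_cancel, hU0]
  have b1 : ‖U (-s) - 1‖ ≤ Nc * ‖U s - 1‖ := by
    rw [e3]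
    calc ‖U (-s) * (1 - U s)‖ ≤ ‖U (-s)‖ * ‖1 - U s‖ := norm_mul_le _ _
      _ ≤ Nc * ‖U s - 1‖ := by
          rw [norm_sub_rev]
          exact mul_le_mul_of_nonneg_right (hnorm _) (norm_nonneg _)
  have e2 : U s * A * U (-s) - A = (U s - 1) * (A * U (-s)) + A * (U (-s) - 1) := by
    noncomm_ring
  calc ‖U s * A * U (-s) - A‖
      = ‖(U s - 1) * (A * U (-s)) + A * (U (-s) - 1)‖ := by rw [e2]
    _ ≤ ‖(U s - 1) * (A * U (-s))‖ + ‖A * (U (-s) - 1)‖ := norm_add_le _ _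
    _ ≤ ‖U s - 1‖ * ‖A * U (-s)‖ + ‖A‖ * ‖U (-s) - 1‖ :=
        add_le_add (norm_mul_le _ _) (norm_mul_le _ _)
    _ ≤ ‖U s - 1‖ * (‖A‖ * Nc) + ‖A‖ * (Nc * ‖U s - 1‖) := by
        apply add_le_add
        · apply mul_le_mul_of_nonneg_left _ (norm_nonneg _)
          exact le_trans (norm_mul_le _ _) (mul_le_mul_of_nonneg_left (hnorm _) (norm_nonneg _))
        · exact mul_le_mul_of_nonneg_left b1 (norm_nonneg _)
    _ = 2 * Nc * ‖A‖ * ‖U s - 1‖ := by ring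
    _ < ε := by
        have key : 2 * Nc * ‖A‖ * ‖U s - 1‖ ≤ 2 * Nc * ‖A‖ * δ :=
          mul_le_mul_of_nonneg_left (le_of_lt hUs) (by positivity)
        nlinarith [mul_pos hNcpos hδpos]
end
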